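/- Let 0 < α < 1. There exists a constant c_α depending only on α such that for every n ∈ ℕ_+ and every x ∈ G, |K_n^α(x)| ≤ (c_α / A_{n−1}^α) Σ_{j=0}^{|n|} 2^{jα} K_{2^j}(x), where |n| is the integer with 2^{|n|} ≤ n < 2^{|n|+1}. -/

import Mathlib

open MeasureTheory Filter Finset
open scoped ENNReal NNReal

noncomputable section

/-- The dyadic group `G = ∏ Z₂`. -/
abbrev G : Type := ℕ → ZMod 2

instance : TopologicalSpace (ZMod 2) := ⊥
instance : DiscreteTopology (ZMod 2) := ⟨rfl⟩
instance : MeasurableSpace (ZMod 2) := ⊤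
instance : BorelSpace (ZMod 2) := ⟨borel_eq_top_of_discrete.symm⟩
instance : ContinuousAdd (ZMod 2) := ⟨continuous_of_discreteTopology⟩
instance : ContinuousNeg (ZMod 2) := ⟨continuous_of_discreteTopology⟩
instance : IsTopologicalAddGroup (ZMod 2) := ⟨⟩

/-- The normalized Haar measure `μ` on the dyadic group `G`. -/
def μG : Measure G := Measure.addHaarMeasure ⊤

/-- The Rademacher functions `r_k(x) = (-1)^{x_k}`. -/
def rad (k : ℕ) (x : G) : ℝ := (-1 : ℝ) ^ (x k).val

/-- The Walsh functions `w_n = ∏_k r_k^{n_k}`, where `n = ∑ n_k 2^k`. -/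
def walsh (n : ℕ) (x : G) : ℝ := ∏ k ∈ Finset.range n, rad k x ^ (Nat.testBit n k).toNat

/-- The Dirichlet kernels `D_n = ∑_{k=0}^{n-1} w_k`. -/
def dirichlet (n : ℕ) (x : G) : ℝ := ∑ k ∈ Finset.range n, walsh k x

/-- The Fejér kernels `K_n = (1/n) ∑_{k=1}^{n} D_k`. -/
def fejer (n : ℕ) (x : G) : ℝ := (n : ℝ)⁻¹ * ∑ k ∈ Finset.Icc 1 n, dirichlet k x

/-- The Cesàro numbers `A_n^α = ((α+1)⋯(α+n))/n!`. -/
def cesA (α : ℝ) (n : ℕ) : ℝ := (∏ i ∈ Finset.range n, (α + i + 1)) / n.factorial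

/-- The `(C,α)` kernels `K_n^α = (1/A_n^α) ∑_{k=1}^n A_{n-k}^{α-1} D_k`. -/
def cesKernel (α : ℝ) (n : ℕ) (x : G) : ℝ :=
  (cesA α n)⁻¹ * ∑ k ∈ Finset.Icc 1 n, cesA (α - 1) (n - k) * dirichlet k x

/-- Walsh–Fourier coefficients of an integrable function. -/
def walshCoeff (f : G → ℝ) (k : ℕ) : ℝ := ∫ x, f x * walsh k x ∂μG

/-- Partial sums `S_m f` of the Walsh–Fourier series. -/
def partialSum (f : G → ℝ) (m : ℕ) (x : G) : ℝ :=
  ∑ k ∈ Finset.range m, walshCoeff f k * walsh k x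

/-- The `(C,α)` means `σ_n^α f = (1/A_n^α) ∑_{k=1}^n A_{n-k}^{α-1} S_k f`. -/
def cesaroMean (α : ℝ) (f : G → ℝ) (n : ℕ) (x : G) : ℝ :=
  (cesA α n)⁻¹ * ∑ k ∈ Finset.Icc 1 n, cesA (α - 1) (n - k) * partialSum f k x

/-- The dyadic interval `I_n(x)`. -/
def dyadicI (n : ℕ) (x : G) : Set G := {y | ∀ i < n, y i = x i}

/-- `e_k ∈ G`: the element whose `k`-th coordinate is `1` and all others `0`. -/
def eG (k : ℕ) : G := fun i => if i = k then 1 else 0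

/-- The projection onto the first `n` coordinates. -/
def projG (n : ℕ) : G → (Fin n → ZMod 2) := fun x i => x i

/-- The dyadic filtration `ℱ_n`, generated by the dyadic intervals of length `n`. -/
def dyadicF : Filtration ℕ (inferInstance : MeasurableSpace G) where
  seq n := MeasurableSpace.comap (projG n) inferInstance
  mono' := by
    intro n m hnm
    have h : projG n = (fun (y : Fin m → ZMod 2) (i : Fin n) => y (Fin.castLE hnm i)) ∘ projG m :=
      rfl
    simp only []
    rw [h, ← MeasurableSpace.comap_comp]
    exact MeasurableSpace.comap_mono
      ((measurable_pi_lambda _ fun i => measurable_pi_apply _).comap_le)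
  le' := fun n => (measurable_pi_lambda _ fun i => measurable_pi_apply _).comap_le

/-- The Walsh–Fourier coefficients `F̂(k) = lim_n ∫ F_n w_k dμ` of a martingale. -/
def martCoeff (F : ℕ → G → ℝ) (k : ℕ) : ℝ :=
  limUnder atTop (fun n => ∫ x, F n x * walsh k x ∂μG)

/-- Partial sums `S_m F` of the Walsh–Fourier series of a martingale. -/
def martSum (F : ℕ → G → ℝ) (m : ℕ) (x : G) : ℝ :=
  ∑ k ∈ Finset.range m, martCoeff F k * walsh k x

/-- The `(C,α)` means of a martingale. -/
def martCesaro (α : ℝ) (F : ℕ → G → ℝ) (n : ℕ) (x : G) : ℝ :=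
  (cesA α n)⁻¹ * ∑ k ∈ Finset.Icc 1 n, cesA (α - 1) (n - k) * martSum F k x

/-- The `L_p(G)` quasi-norm `(∫ |f|^p dμ)^{1/p}`, valued in `ℝ≥0∞`. -/
def LpNormG (p : ℝ) (f : G → ℝ) : ℝ≥0∞ :=
  (∫⁻ x, ENNReal.ofReal |f x| ^ p ∂μG) ^ (1 / p)

/-- The Hardy space quasi-norm `‖F‖_{H_p} = ‖sup_n |F_n|‖_p` of a martingale. -/
def hardyNorm (p : ℝ) (F : ℕ → G → ℝ) : ℝ≥0∞ :=
  (∫⁻ x, (⨆ n, ENNReal.ofReal |F n x|) ^ p ∂μG) ^ (1 / p)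

/-- The Hardy quasi-norm of an integrable function, via its generated martingale `(E_n f)`. -/
def hardyFnNorm (p : ℝ) (f : G → ℝ) : ℝ≥0∞ :=
  hardyNorm p (fun n => μG[f | dyadicF n])

/-!
Write `n = 2 ^ N + m` with `m < 2 ^ N`. Since `D_{2^N + l} = D_{2^N} + r_N D_l` and
`D_{2^N - j} = D_{2^N} - w_{2^N - 1} D_j`, the unnormalized kernel `A_n^α K_n^α` splits into
`A_n^α D_{2^N}`, which is `O(2^{Nα} K_{2^N})` because `2^N D_{2^N} ≤ 2 · 2^N K_{2^N}`;
the sum `w_{2^N - 1} ∑_{j ≤ 2^N} A_{m+j}^{α-1} D_j`, which Abel summation and the bound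
`|∑_{k ≤ q} D_k| ≤ 3 ∑_{2^i ≤ q} 2^i K_{2^i}` control by
`3 ∑_{i ≤ N} (m + 2^i)^{α-1} 2^i K_{2^i}`; and `± A_m^α K_m^α`.
Iterating along the binary digits of `n`, the weights collected by `2^i K_{2^i}` decay
geometrically, because each step multiplies `m + 2^i` by at least `3/2`; the induction closes
with the potential `C 2^{i(α-1)} - K (n + 2^i)^{α-1}`.
-/

theorem Nat.two_pow_add_induction {P : ℕ → Prop} (zero : P 0)
    (step : ∀ N m, m < 2 ^ N → P m → P (2 ^ N + m)) (n : ℕ) : P n := by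
  induction n using Nat.strong_induction_on with
  | _ n ih =>
    rcases Nat.eq_zero_or_pos n with rfl | hn
    · exact zero
    have hle : 2 ^ Nat.log 2 n ≤ n := Nat.pow_log_le_self 2 hn.ne'
    have hlt : n < 2 ^ Nat.log 2 n * 2 := by
      rw [← pow_succ]; exact Nat.lt_pow_succ_log_self (by norm_num) n
    obtain ⟨m, hm⟩ := Nat.exists_eq_add_of_le hle
    rw [hm]
    exact step _ m (by omega) (ih m (by omega))

theorem Nat.two_pow_xor_of_lt {N j : ℕ} (hj : j < 2 ^ N) : 2 ^ N ^^^ j = 2 ^ N + j := by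
  rw [← Nat.mul_one (2 ^ N), Nat.two_pow_add_eq_or_of_lt hj]
  apply Nat.eq_of_testBit_eq
  intro i
  rcases lt_or_ge i N with hi | hi
  · simp [hi.ne']
  · simp [Nat.testBit_lt_two_pow (lt_of_lt_of_le hj (Nat.pow_le_pow_right two_pos hi))]

theorem Nat.two_pow_sub_one_xor_of_lt {N j : ℕ} (hj : j < 2 ^ N) :
    (2 ^ N - 1) ^^^ j = 2 ^ N - (j + 1) := by
  apply Nat.eq_of_testBit_eq
  intro i
  rw [Nat.testBit_two_pow_sub_succ hj, Nat.testBit_xor, Nat.testBit_two_pow_sub_one]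
  rcases lt_or_ge i N with hi | hi
  · simp [hi]
  · simp [hi.not_gt, Nat.testBit_lt_two_pow (lt_of_lt_of_le hj (Nat.pow_le_pow_right two_pos hi))]

theorem Nat.size_two_pow_add {N m : ℕ} (hm : m < 2 ^ N) : Nat.size (2 ^ N + m) = N + 1 :=
  le_antisymm (Nat.size_le.2 (by rw [pow_succ]; omega)) (Nat.lt_size.2 (Nat.le_add_right _ _))

theorem Finset.sum_range_sub_eq_sum_Icc {M : Type*} [AddCommMonoid M] (f : ℕ → M) (Q : ℕ) :
    ∑ k ∈ Finset.range Q, f (Q - k) = ∑ j ∈ Finset.Icc 1 Q, f j :=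
  Finset.sum_nbij' (fun k => Q - k) (fun j => Q - j) (by simp; omega) (by simp; omega)
    (by simp; omega) (by simp; omega) (fun _ _ => rfl)

section Walsh

variable (x : G)

theorem rad_mul_self (k : ℕ) : rad k x * rad k x = 1 := by
  rw [rad, ← pow_add, ← two_mul, pow_mul]; norm_num

theorem abs_rad (k : ℕ) : |rad k x| = 1 := by simp [rad]

theorem walsh_eq_prod_range {n M : ℕ} (h : n < 2 ^ M) :
    walsh n x = ∏ k ∈ Finset.range M, rad k x ^ (n.testBit k).toNat := by
  have hbit : ∀ k, n < 2 ^ k → rad k x ^ (n.testBit k).toNat = 1 := fun k hk => by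
    simp [Nat.testBit_lt_two_pow hk]
  rcases le_total n M with hnM | hMn
  · exact Finset.prod_subset (Finset.range_subset_range.2 hnM) fun k _ hk =>
      hbit k (lt_of_lt_of_le Nat.lt_two_pow_self
        (Nat.pow_le_pow_right two_pos (by simpa using hk)))
  · exact (Finset.prod_subset (Finset.range_subset_range.2 hMn) fun k _ hk =>
      hbit k (lt_of_lt_of_le h (Nat.pow_le_pow_right two_pos (by simpa using hk)))).symm

theorem abs_walsh (n : ℕ) : |walsh n x| = 1 := by
  simp [walsh, Finset.abs_prod, abs_rad]

theorem walsh_mul (a b : ℕ) : walsh a x * walsh b x = walsh (a ^^^ b) x := by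
  have ha : a < 2 ^ (a + b) :=
    Nat.lt_two_pow_self.trans_le (Nat.pow_le_pow_right two_pos (by omega))
  have hb : b < 2 ^ (a + b) :=
    Nat.lt_two_pow_self.trans_le (Nat.pow_le_pow_right two_pos (by omega))
  rw [walsh_eq_prod_range x ha, walsh_eq_prod_range x hb,
    walsh_eq_prod_range x (Nat.xor_lt_two_pow ha hb), ← Finset.prod_mul_distrib]
  refine Finset.prod_congr rfl fun k _ => ?_
  rw [Nat.testBit_xor]
  cases a.testBit k <;> cases b.testBit k <;> simp [rad_mul_self]

theorem walsh_two_pow (N : ℕ) : walsh (2 ^ N) x = rad N x := by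
  rw [walsh_eq_prod_range x (Nat.pow_lt_pow_right one_lt_two (Nat.lt_succ_self N)),
    Finset.prod_eq_single N]
  · simp
  · intro k _ hk; simp [Ne.symm hk]
  · simp

theorem walsh_two_pow_add {N j : ℕ} (hj : j < 2 ^ N) :
    walsh (2 ^ N + j) x = rad N x * walsh j x := by
  rw [← Nat.two_pow_xor_of_lt hj, ← walsh_mul, walsh_two_pow]

theorem walsh_two_pow_sub {N j : ℕ} (hj : j < 2 ^ N) :
    walsh (2 ^ N - (j + 1)) x = walsh (2 ^ N - 1) x * walsh j x := by
  rw [← Nat.two_pow_sub_one_xor_of_lt hj, walsh_mul]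

theorem one_add_rad_nonneg (N : ℕ) : 0 ≤ 1 + rad N x := by
  linarith [(abs_le.1 (abs_rad x N).le).1]

theorem one_sub_rad_nonneg (N : ℕ) : 0 ≤ 1 - rad N x := by
  linarith [(abs_le.1 (abs_rad x N).le).2]

end Walsh

section Dirichlet

variable (x : G)

theorem dirichlet_zero : dirichlet 0 x = 0 := by simp [dirichlet]

theorem dirichlet_two_pow_add {N l : ℕ} (hl : l ≤ 2 ^ N) :
    dirichlet (2 ^ N + l) x = dirichlet (2 ^ N) x + rad N x * dirichlet l x := by
  rw [dirichlet, Finset.sum_range_add, dirichlet, dirichlet, Finset.mul_sum]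
  congr 1
  exact Finset.sum_congr rfl fun j hj =>
    walsh_two_pow_add x (lt_of_lt_of_le (Finset.mem_range.1 hj) hl)

theorem dirichlet_two_pow_sub {N j : ℕ} (hj : j ≤ 2 ^ N) :
    dirichlet (2 ^ N - j) x = dirichlet (2 ^ N) x - walsh (2 ^ N - 1) x * dirichlet j x := by
  have hsplit : dirichlet (2 ^ N) x = dirichlet (2 ^ N - j) x
      + ∑ i ∈ Finset.range j, walsh (2 ^ N - j + i) x := by
    rw [dirichlet, dirichlet, ← Finset.sum_range_add, Nat.sub_add_cancel hj]
  suffices ∑ i ∈ Finset.range j, walsh (2 ^ N - j + i) x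
      = walsh (2 ^ N - 1) x * dirichlet j x by rw [hsplit, this]; ring
  rw [dirichlet, Finset.mul_sum, ← Finset.sum_range_reflect]
  have hterm : ∀ i ∈ Finset.range j,
      walsh (2 ^ N - j + (j - 1 - i)) x = walsh (2 ^ N - 1) x * walsh i x := fun i hi => by
    have hi := Finset.mem_range.1 hi
    rw [← walsh_two_pow_sub x (by omega)]
    congr 1
    omega
  exact Finset.sum_congr rfl hterm

theorem dirichlet_two_pow_succ (N : ℕ) :
    dirichlet (2 ^ (N + 1)) x = (1 + rad N x) * dirichlet (2 ^ N) x := by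
  rw [pow_succ, mul_two, dirichlet_two_pow_add x le_rfl]
  ring

theorem dirichlet_two_pow_nonneg (N : ℕ) : 0 ≤ dirichlet (2 ^ N) x := by
  induction N with
  | zero => simp [dirichlet, walsh]
  | succ N ih =>
    rw [dirichlet_two_pow_succ]
    exact mul_nonneg (one_add_rad_nonneg x N) ih

end Dirichlet

def dirichletSum (q : ℕ) (x : G) : ℝ := ∑ k ∈ Finset.Icc 1 q, dirichlet k x

section DirichletSum

variable (x : G)

theorem fejer_eq_inv_mul_dirichletSum (q : ℕ) :
    fejer q x = (q : ℝ)⁻¹ * dirichletSum q x := rfl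

theorem dirichletSum_zero : dirichletSum 0 x = 0 := by simp [dirichletSum]

theorem dirichletSum_succ (q : ℕ) :
    dirichletSum (q + 1) x = dirichletSum q x + dirichlet (q + 1) x :=
  Finset.sum_Icc_succ_top (by omega) _

theorem dirichletSum_two_pow_add {N r : ℕ} (hr : r ≤ 2 ^ N) :
    dirichletSum (2 ^ N + r) x
      = dirichletSum (2 ^ N) x + r * dirichlet (2 ^ N) x + rad N x * dirichletSum r x := by
  induction r with
  | zero => simp [dirichletSum_zero]
  | succ r ih =>
    rw [← add_assoc, dirichletSum_succ, ih (by omega), dirichletSum_succ, Nat.add_assoc,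
      dirichlet_two_pow_add x hr]
    push_cast
    ring

theorem dirichletSum_two_pow_succ (N : ℕ) :
    dirichletSum (2 ^ (N + 1)) x
      = (1 + rad N x) * dirichletSum (2 ^ N) x + 2 ^ N * dirichlet (2 ^ N) x := by
  rw [pow_succ, mul_two, dirichletSum_two_pow_add x le_rfl]
  push_cast
  ring

theorem dirichletSum_two_pow_nonneg (N : ℕ) : 0 ≤ dirichletSum (2 ^ N) x := by
  induction N with
  | zero => simp [dirichletSum, dirichlet, walsh]
  | succ N ih =>
    rw [dirichletSum_two_pow_succ]
    have := dirichlet_two_pow_nonneg x N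
    have := one_add_rad_nonneg x N
    positivity

theorem two_pow_mul_dirichlet_le (N : ℕ) :
    2 ^ N * dirichlet (2 ^ N) x ≤ 2 * dirichletSum (2 ^ N) x := by
  induction N with
  | zero => simp [dirichletSum, dirichlet, walsh]
  | succ N ih =>
    -- `E_N = 2 S_{2^N} - 2^N D_{2^N}`, with `S = dirichletSum`, satisfies
    -- `E_{N+1} = (1 + r_N) E_N + (1 - r_N) 2^N D_{2^N}`
    have hD := dirichlet_two_pow_nonneg x N
    have h1 := mul_nonneg (one_add_rad_nonneg x N) (sub_nonneg.2 ih)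
    have h2 := mul_nonneg (one_sub_rad_nonneg x N)
      (mul_nonneg (pow_nonneg zero_le_two N) hD)
    rw [dirichletSum_two_pow_succ, dirichlet_two_pow_succ, pow_succ]
    nlinarith

theorem abs_dirichletSum_le (q : ℕ) :
    |dirichletSum q x| ≤ 3 * ∑ i ∈ Finset.range (Nat.size q), dirichletSum (2 ^ i) x := by
  induction q using Nat.two_pow_add_induction with
  | zero => simp [dirichletSum_zero]
  | step N m hm ih =>
    have hS := dirichletSum_two_pow_nonneg x N
    have hD := dirichlet_two_pow_nonneg x N
    have hmD : m * dirichlet (2 ^ N) x ≤ 2 * dirichletSum (2 ^ N) x :=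
      (mul_le_mul_of_nonneg_right (by exact_mod_cast hm.le) hD).trans
        (two_pow_mul_dirichlet_le x N)
    have hsub : ∑ i ∈ Finset.range (Nat.size m), dirichletSum (2 ^ i) x
        ≤ ∑ i ∈ Finset.range N, dirichletSum (2 ^ i) x :=
      Finset.sum_le_sum_of_subset_of_nonneg (Finset.range_subset_range.2 (Nat.size_le.2 hm))
        fun i _ _ => dirichletSum_two_pow_nonneg x i
    rw [dirichletSum_two_pow_add x hm.le, Nat.size_two_pow_add hm, Finset.sum_range_succ]
    calc _ ≤ |dirichletSum (2 ^ N) x + m * dirichlet (2 ^ N) x|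
          + |rad N x * dirichletSum m x| := abs_add_le _ _
      _ ≤ _ := by rw [abs_of_nonneg (by positivity), abs_mul, abs_rad, one_mul]; linarith

theorem abs_sum_mul_dirichlet_le (P : ℕ) (b : ℕ → ℝ) (hanti : AntitoneOn b (Set.Icc 1 P))
    (hnonneg : ∀ j ∈ Set.Icc 1 P, 0 ≤ b j) :
    |∑ j ∈ Finset.Icc 1 P, b j * dirichlet j x|
      ≤ 3 * ∑ i ∈ Finset.range (Nat.size P), b (2 ^ i) * dirichletSum (2 ^ i) x := by
  induction P generalizing b with
  | zero => simp
  | succ P ih =>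
    set β := b (P + 1)
    have hβ : 0 ≤ β := hnonneg _ (Set.right_mem_Icc.2 (by omega))
    have hsplit : ∑ j ∈ Finset.Icc 1 (P + 1), b j * dirichlet j x
        = ∑ j ∈ Finset.Icc 1 P, (b j - β) * dirichlet j x + β * dirichletSum (P + 1) x := by
      rw [dirichletSum, Finset.sum_Icc_succ_top (by omega), Finset.sum_Icc_succ_top (by omega)]
      simp only [sub_mul, Finset.sum_sub_distrib, ← Finset.mul_sum]
      ring
    have hmem : Set.Icc 1 P ⊆ Set.Icc 1 (P + 1) := Set.Icc_subset_Icc_right (Nat.le_succ P)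
    have hIH := ih (fun j => b j - β)
      (fun i hi j hj hij => sub_le_sub_right (hanti (hmem hi) (hmem hj) hij) β)
      (fun j hj => sub_nonneg.2 (hanti (hmem hj) (Set.right_mem_Icc.2 (by omega))
        (hj.2.trans (Nat.le_succ P))))
    have hsize : Nat.size P ≤ Nat.size (P + 1) := Nat.size_le_size (Nat.le_succ P)
    -- the indices gained in passing from `P` to `P + 1` are those with `2 ^ i = P + 1`
    have htop : ∀ i ∈ Finset.Ico (Nat.size P) (Nat.size (P + 1)),
        b (2 ^ i) * dirichletSum (2 ^ i) x = β * dirichletSum (2 ^ i) x := fun i hi => by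
      rw [Finset.mem_Ico, Nat.lt_size, ← not_lt, Nat.lt_size] at hi
      rw [show 2 ^ i = P + 1 by omega]
    calc _ ≤ |∑ j ∈ Finset.Icc 1 P, (b j - β) * dirichlet j x|
          + β * |dirichletSum (P + 1) x| := by
          rw [hsplit, ← abs_of_nonneg hβ, ← abs_mul, abs_of_nonneg hβ]; exact abs_add_le _ _
      _ ≤ 3 * ∑ i ∈ Finset.range (Nat.size P), (b (2 ^ i) - β) * dirichletSum (2 ^ i) x
          + β * (3 * ∑ i ∈ Finset.range (Nat.size (P + 1)), dirichletSum (2 ^ i) x) :=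
          add_le_add hIH (mul_le_mul_of_nonneg_left (abs_dirichletSum_le x _) hβ)
      _ = _ := by
          rw [← Finset.sum_range_add_sum_Ico _ hsize, ← Finset.sum_range_add_sum_Ico _ hsize,
            Finset.sum_congr rfl htop]
          simp only [sub_mul, Finset.sum_sub_distrib, ← Finset.mul_sum]
          ring

end DirichletSum

section Cesaro

variable {β : ℝ}

theorem cesA_zero (β : ℝ) : cesA β 0 = 1 := by simp [cesA]

theorem cesA_succ (β : ℝ) (n : ℕ) : cesA β (n + 1) = cesA β n * (1 + β / (n + 1)) := by
  have hn : (n : ℝ) + 1 ≠ 0 := by positivity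
  simp only [cesA, Finset.prod_range_succ, Nat.factorial_succ, Nat.cast_mul, Nat.cast_succ]
  field_simp
  ring

theorem one_add_div_succ_pos (hβ : -1 < β) (n : ℕ) : 0 < 1 + β / (n + 1) := by
  have hn : (0 : ℝ) < n + 1 := by positivity
  have : -1 < β / (n + 1) := by
    rw [lt_div_iff₀ hn]; nlinarith [(Nat.cast_nonneg n : (0 : ℝ) ≤ n)]
  linarith

theorem cesA_pos (hβ : -1 < β) (n : ℕ) : 0 < cesA β n := by
  induction n with
  | zero => simp [cesA_zero]
  | succ n ih => rw [cesA_succ]; exact mul_pos ih (one_add_div_succ_pos hβ n)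

theorem cesA_sub_one_succ (β : ℝ) (n : ℕ) :
    cesA (β - 1) (n + 1) = cesA β n * (β / (n + 1)) := by
  induction n with
  | zero => simp [cesA_succ, cesA_zero]
  | succ n ih =>
    rw [cesA_succ, ih, cesA_succ]
    push_cast
    field_simp
    ring

theorem sum_range_cesA_sub_one (β : ℝ) (n : ℕ) :
    ∑ q ∈ Finset.range (n + 1), cesA (β - 1) q = cesA β n := by
  induction n with
  | zero => simp [cesA_zero]
  | succ n ih =>
    rw [Finset.sum_range_succ, ih, cesA_sub_one_succ, cesA_succ]
    ring

theorem cesA_antitone (hβ : -1 < β) (hβ0 : β ≤ 0) : Antitone (cesA β) :=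
  antitone_nat_of_succ_le fun n => by
    rw [cesA_succ]
    have : β / (n + 1) ≤ 0 := div_nonpos_of_nonpos_of_nonneg hβ0 (by positivity)
    nlinarith [cesA_pos hβ n]

theorem cesA_monotone (hβ : 0 ≤ β) : Monotone (cesA β) :=
  monotone_nat_of_le_succ fun n => by
    rw [cesA_succ]
    have : 0 ≤ β / (n + 1) := by positivity
    nlinarith [cesA_pos (by linarith : -1 < β) n]

theorem cesA_le_exp_mul_harmonic (hβ : -1 < β) (n : ℕ) :
    cesA β n ≤ Real.exp (β * harmonic n) := by
  induction n with
  | zero => simp [cesA_zero]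
  | succ n ih =>
    rw [cesA_succ, harmonic_succ]
    push_cast
    rw [mul_add β, Real.exp_add, ← div_eq_mul_inv]
    calc _ ≤ Real.exp (β * harmonic n) * (1 + β / (n + 1)) :=
          mul_le_mul_of_nonneg_right ih (one_add_div_succ_pos hβ n).le
      _ ≤ _ := by
          gcongr
          rw [add_comm]; exact Real.add_one_le_exp _

theorem cesA_le_rpow_of_nonpos (hβ : -1 < β) (hβ0 : β ≤ 0) (n : ℕ) :
    cesA β n ≤ ((n : ℝ) + 1) ^ β := by
  refine (cesA_le_exp_mul_harmonic hβ n).trans ?_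
  have hlog := log_add_one_le_harmonic n
  push_cast at hlog
  rw [Real.rpow_def_of_pos (by positivity), mul_comm (Real.log _)]
  exact Real.exp_le_exp.2 (mul_le_mul_of_nonpos_left hlog hβ0)

theorem cesA_le_exp_mul_rpow (hβ : 0 ≤ β) (n : ℕ) :
    cesA β n ≤ Real.exp β * ((n : ℝ) + 1) ^ β := by
  refine (cesA_le_exp_mul_harmonic (by linarith) n).trans ?_
  have hlog := harmonic_le_one_add_log (n + 1)
  rw [harmonic_succ] at hlog
  push_cast at hlog
  have hstep : (0 : ℝ) ≤ ((n : ℝ) + 1)⁻¹ := by positivity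
  rw [Real.rpow_def_of_pos (by positivity), ← Real.exp_add]
  exact Real.exp_le_exp.2 (by nlinarith)

end Cesaro

/-- With `a = A^{α-1}` this is `A_n^α K_n^α`. -/
def dirichletConv (a : ℕ → ℝ) (n : ℕ) (x : G) : ℝ :=
  ∑ k ∈ Finset.Icc 1 n, a (n - k) * dirichlet k x

section DirichletConv

variable (x : G)

theorem dirichletConv_zero (a : ℕ → ℝ) : dirichletConv a 0 x = 0 := by simp [dirichletConv]

theorem dirichletConv_eq_sum_range (a : ℕ → ℝ) (n : ℕ) :
    dirichletConv a n x = ∑ k ∈ Finset.range (n + 1), a (n - k) * dirichlet k x := by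
  rw [Finset.range_eq_Ico, Finset.sum_eq_sum_Ico_succ_bot (Nat.succ_pos n), dirichlet_zero,
    mul_zero, zero_add, dirichletConv, zero_add, Nat.succ_eq_add_one,
    Finset.Ico_add_one_right_eq_Icc]

theorem dirichletConv_two_pow_add (a : ℕ → ℝ) {N m : ℕ} (hm : m ≤ 2 ^ N) :
    dirichletConv a (2 ^ N + m) x
      = (∑ q ∈ Finset.range (2 ^ N + m + 1), a q) * dirichlet (2 ^ N) x
        - walsh (2 ^ N - 1) x * ∑ j ∈ Finset.Icc 1 (2 ^ N), a (m + j) * dirichlet j x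
        + rad N x * dirichletConv a m x := by
  have hlow : ∀ k ∈ Finset.range (2 ^ N), a (2 ^ N + m - k) * dirichlet k x
      = a (2 ^ N + m - k) * dirichlet (2 ^ N) x
        - walsh (2 ^ N - 1) x * (a (m + (2 ^ N - k)) * dirichlet (2 ^ N - k) x) := by
    intro k hk
    have hk := Finset.mem_range.1 hk
    rw [show m + (2 ^ N - k) = 2 ^ N + m - k by omega]
    have hD := dirichlet_two_pow_sub x (Nat.sub_le (2 ^ N) k)
    rw [Nat.sub_sub_self hk.le] at hD
    rw [hD]
    ring
  have hhigh : ∀ l ∈ Finset.range (m + 1), a (2 ^ N + m - (2 ^ N + l)) * dirichlet (2 ^ N + l) x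
      = a (m - l) * dirichlet (2 ^ N) x + rad N x * (a (m - l) * dirichlet l x) := by
    intro l hl
    rw [dirichlet_two_pow_add x (by have := Finset.mem_range.1 hl; omega),
      show 2 ^ N + m - (2 ^ N + l) = m - l by omega]
    ring
  have hcoef : ∑ q ∈ Finset.range (2 ^ N + m + 1), a q
      = ∑ k ∈ Finset.range (2 ^ N), a (2 ^ N + m - k)
        + ∑ l ∈ Finset.range (m + 1), a (m - l) := by
    rw [← Finset.sum_range_reflect, add_assoc, Finset.sum_range_add]
    congr 1
    all_goals exact Finset.sum_congr rfl fun k _ => congrArg a (by omega)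
  rw [dirichletConv_eq_sum_range, dirichletConv_eq_sum_range, hcoef, add_assoc,
    Finset.sum_range_add, Finset.sum_congr rfl hlow, Finset.sum_congr rfl hhigh,
    ← Finset.sum_range_sub_eq_sum_Icc (fun j => a (m + j) * dirichlet j x)]
  simp only [Finset.sum_sub_distrib, Finset.sum_add_distrib, ← Finset.mul_sum, ← Finset.sum_mul]
  ring

end DirichletConv

section Estimates

variable {α : ℝ} (x : G)

theorem cesA_mul_dirichlet_two_pow_le (hα : 0 ≤ α) {n N : ℕ} (hn : n < 2 ^ (N + 1)) :
    cesA α n * dirichlet (2 ^ N) x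
      ≤ 2 * Real.exp α * 2 ^ α * ((2 : ℝ) ^ N) ^ (α - 1) * dirichletSum (2 ^ N) x := by
  have hD := dirichlet_two_pow_nonneg x N
  have h2N : (0 : ℝ) < 2 ^ N := by positivity
  have hn' : (n : ℝ) + 1 ≤ 2 * 2 ^ N := by
    rw [pow_succ] at hn; exact_mod_cast (by omega : n + 1 ≤ 2 * 2 ^ N)
  have hA : cesA α n ≤ Real.exp α * 2 ^ α * ((2 : ℝ) ^ N) ^ α :=
    calc cesA α n ≤ Real.exp α * ((n : ℝ) + 1) ^ α := cesA_le_exp_mul_rpow hα n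
      _ ≤ Real.exp α * (2 * 2 ^ N) ^ α := by gcongr
      _ = Real.exp α * 2 ^ α * ((2 : ℝ) ^ N) ^ α := by
          rw [Real.mul_rpow zero_le_two h2N.le]; ring
  calc cesA α n * dirichlet (2 ^ N) x
      ≤ Real.exp α * 2 ^ α * ((2 : ℝ) ^ N) ^ α * dirichlet (2 ^ N) x :=
        mul_le_mul_of_nonneg_right hA hD
    _ = Real.exp α * 2 ^ α * ((2 : ℝ) ^ N) ^ (α - 1) * (2 ^ N * dirichlet (2 ^ N) x) := by
        rw [Real.rpow_sub_one h2N.ne']; field_simp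
    _ ≤ Real.exp α * 2 ^ α * ((2 : ℝ) ^ N) ^ (α - 1) * (2 * dirichletSum (2 ^ N) x) := by
        gcongr ?_ * ?_; exact two_pow_mul_dirichlet_le x N
    _ = _ := by ring

theorem abs_sum_cesA_mul_dirichlet_le (hα0 : 0 < α) (hα1 : α ≤ 1) (m N : ℕ) :
    |∑ j ∈ Finset.Icc 1 (2 ^ N), cesA (α - 1) (m + j) * dirichlet j x|
      ≤ 3 * ∑ i ∈ Finset.range (N + 1),
        ((m : ℝ) + 2 ^ i) ^ (α - 1) * dirichletSum (2 ^ i) x := by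
  have hanti := cesA_antitone (β := α - 1) (by linarith) (by linarith)
  refine (abs_sum_mul_dirichlet_le x (2 ^ N) (fun j => cesA (α - 1) (m + j))
    (fun i _ j _ hij => hanti (by omega)) fun j _ => (cesA_pos (by linarith) _).le).trans ?_
  rw [Nat.size_pow]
  gcongr with i
  · exact dirichletSum_two_pow_nonneg x i
  · refine (cesA_le_rpow_of_nonpos (by linarith) (by linarith) _).trans
      (Real.rpow_le_rpow_of_nonpos (by positivity) ?_ (by linarith))
    push_cast; linarith

theorem abs_dirichletConv_two_pow_add_le (hα0 : 0 < α) (hα1 : α ≤ 1) {N m : ℕ}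
    (hm : m < 2 ^ N) :
    |dirichletConv (cesA (α - 1)) (2 ^ N + m) x|
      ≤ 2 * Real.exp α * 2 ^ α * ((2 : ℝ) ^ N) ^ (α - 1) * dirichletSum (2 ^ N) x
        + 3 * ∑ i ∈ Finset.range (N + 1),
          ((m : ℝ) + 2 ^ i) ^ (α - 1) * dirichletSum (2 ^ i) x
        + |dirichletConv (cesA (α - 1)) m x| := by
  rw [dirichletConv_two_pow_add x _ hm.le, sum_range_cesA_sub_one]
  have hAD := cesA_mul_dirichlet_two_pow_le x hα0.le (n := 2 ^ N + m) (N := N)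
    (by rw [pow_succ]; omega)
  have hAD0 : 0 ≤ cesA α (2 ^ N + m) * dirichlet (2 ^ N) x :=
    mul_nonneg (cesA_pos (by linarith) _).le (dirichlet_two_pow_nonneg x N)
  have hV := abs_sum_cesA_mul_dirichlet_le x hα0 hα1 m N
  calc _ ≤ |cesA α (2 ^ N + m) * dirichlet (2 ^ N) x| + |walsh (2 ^ N - 1) x
          * ∑ j ∈ Finset.Icc 1 (2 ^ N), cesA (α - 1) (m + j) * dirichlet j x|
          + |rad N x * dirichletConv (cesA (α - 1)) m x| :=
        (abs_add_le _ _).trans (add_le_add_left (abs_sub _ _) _)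
    _ ≤ _ := by
        rw [abs_of_nonneg hAD0, abs_mul, abs_mul, abs_walsh, abs_rad, one_mul, one_mul]
        linarith

end Estimates

/-- The subtracted term is a potential that pays for the error terms accumulated along the
binary digits of `n`. -/
def kernelWeight (α C K : ℝ) (n i : ℕ) : ℝ :=
  C * ((2 : ℝ) ^ i) ^ (α - 1) - K * ((n : ℝ) + 2 ^ i) ^ (α - 1)

section KernelWeight

variable {α C K : ℝ}

theorem nonneg_of_three_le_mul_one_sub_rpow (hα : α ≤ 1)
    (hK : 3 ≤ K * (1 - (3 / 2 : ℝ) ^ (α - 1))) : 0 ≤ K := by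
  by_contra! h
  nlinarith [Real.rpow_le_one_of_one_le_of_nonpos (by norm_num : (1 : ℝ) ≤ 3 / 2)
    (by linarith : α - 1 ≤ 0), (by positivity : 0 < (3 / 2 : ℝ) ^ (α - 1))]

theorem sub_mul_le_kernelWeight (hα : α ≤ 1) (hK : 0 ≤ K) (n i : ℕ) :
    (C - K) * ((2 : ℝ) ^ i) ^ (α - 1) ≤ kernelWeight α C K n i := by
  have : ((n : ℝ) + 2 ^ i) ^ (α - 1) ≤ ((2 : ℝ) ^ i) ^ (α - 1) :=
    Real.rpow_le_rpow_of_nonpos (by positivity) (by simp) (by linarith)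
  rw [kernelWeight]
  nlinarith

theorem kernelWeight_le (hK : 0 ≤ K) (n i : ℕ) :
    kernelWeight α C K n i ≤ C * ((2 : ℝ) ^ i) ^ (α - 1) := by
  rw [kernelWeight]
  have : 0 ≤ ((n : ℝ) + 2 ^ i) ^ (α - 1) := by positivity
  nlinarith

theorem kernelWeight_two_pow_add (hα : α ≤ 1) (hK : 3 ≤ K * (1 - (3 / 2 : ℝ) ^ (α - 1)))
    {N m i : ℕ} (hm : m ≤ 2 ^ N) (hi : i ≤ N) :
    3 * ((m : ℝ) + 2 ^ i) ^ (α - 1) + kernelWeight α C K m i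
      ≤ kernelWeight α C K (2 ^ N + m) i := by
  have hm' : (m : ℝ) ≤ 2 ^ N := by exact_mod_cast hm
  have hi' : (2 : ℝ) ^ i ≤ 2 ^ N := pow_le_pow_right₀ one_le_two hi
  have hgrow : (((2 ^ N + m : ℕ) : ℝ) + 2 ^ i) ^ (α - 1)
      ≤ (3 / 2 : ℝ) ^ (α - 1) * ((m : ℝ) + 2 ^ i) ^ (α - 1) := by
    rw [← Real.mul_rpow (by norm_num) (by positivity)]
    exact Real.rpow_le_rpow_of_nonpos (by positivity) (by push_cast; linarith) (by linarith)
  have hX : 0 ≤ ((m : ℝ) + 2 ^ i) ^ (α - 1) := by positivity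
  rw [kernelWeight, kernelWeight]
  nlinarith [mul_le_mul_of_nonneg_left hgrow (nonneg_of_three_le_mul_one_sub_rpow hα hK)]

end KernelWeight

section MainEstimate

variable {α C K : ℝ} (x : G)

theorem abs_dirichletConv_le_sum_kernelWeight (hα0 : 0 < α) (hα1 : α ≤ 1)
    (hK : 3 ≤ K * (1 - (3 / 2 : ℝ) ^ (α - 1))) (hC : K + 2 * Real.exp α * 2 ^ α ≤ C)
    (n : ℕ) :
    ∀ M, n < 2 ^ M → |dirichletConv (cesA (α - 1)) n x|
      ≤ ∑ i ∈ Finset.range M, kernelWeight α C K n i * dirichletSum (2 ^ i) x := by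
  have hK0 := nonneg_of_three_le_mul_one_sub_rpow hα1 hK
  have hS := dirichletSum_two_pow_nonneg x
  have hweight (n i : ℕ) : 2 * Real.exp α * 2 ^ α * ((2 : ℝ) ^ i) ^ (α - 1)
      ≤ kernelWeight α C K n i :=
    le_trans (by gcongr; linarith) (sub_mul_le_kernelWeight hα1 hK0 n i)
  have hweight_nonneg (n i : ℕ) : 0 ≤ kernelWeight α C K n i :=
    (by positivity : (0 : ℝ) ≤ 2 * Real.exp α * 2 ^ α * ((2 : ℝ) ^ i) ^ (α - 1)).trans
      (hweight n i)
  induction n using Nat.two_pow_add_induction with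
  | zero =>
    intro M _
    rw [dirichletConv_zero, abs_zero]
    exact Finset.sum_nonneg fun i _ => mul_nonneg (hweight_nonneg 0 i) (hS i)
  | step N m hm ih =>
    intro M hM
    have hNM : N + 1 ≤ M := (Nat.pow_lt_pow_iff_right one_lt_two).1 (by omega)
    calc _ ≤ 2 * Real.exp α * 2 ^ α * ((2 : ℝ) ^ N) ^ (α - 1) * dirichletSum (2 ^ N) x
          + 3 * ∑ i ∈ Finset.range (N + 1),
            ((m : ℝ) + 2 ^ i) ^ (α - 1) * dirichletSum (2 ^ i) x
          + ∑ i ∈ Finset.range N, kernelWeight α C K m i * dirichletSum (2 ^ i) x :=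
          (abs_dirichletConv_two_pow_add_le x hα0 hα1 hm).trans (by gcongr; exact ih N hm)
      _ ≤ ∑ i ∈ Finset.range (N + 1),
            (3 * ((m : ℝ) + 2 ^ i) ^ (α - 1) + kernelWeight α C K m i)
              * dirichletSum (2 ^ i) x := by
          rw [Finset.mul_sum]
          simp only [add_mul, Finset.sum_add_distrib, mul_assoc]
          rw [Finset.sum_range_succ (fun i => kernelWeight α C K m i * dirichletSum (2 ^ i) x)]
          linarith [mul_le_mul_of_nonneg_right (hweight m N) (hS N)]
      _ ≤ ∑ i ∈ Finset.range (N + 1),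
            kernelWeight α C K (2 ^ N + m) i * dirichletSum (2 ^ i) x :=
          Finset.sum_le_sum fun i hi => mul_le_mul_of_nonneg_right
            (kernelWeight_two_pow_add hα1 hK hm.le (Nat.lt_succ_iff.1 (Finset.mem_range.1 hi)))
            (hS i)
      _ ≤ _ := Finset.sum_le_sum_of_subset_of_nonneg (Finset.range_subset_range.2 hNM)
            fun i _ _ => mul_nonneg (hweight_nonneg _ i) (hS i)

theorem abs_dirichletConv_le (hα0 : 0 < α) (hα1 : α ≤ 1)
    (hK : 3 ≤ K * (1 - (3 / 2 : ℝ) ^ (α - 1))) (hC : K + 2 * Real.exp α * 2 ^ α ≤ C)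
    (n : ℕ) :
    |dirichletConv (cesA (α - 1)) n x|
      ≤ C * ∑ i ∈ Finset.range (Nat.log 2 n + 1),
        ((2 : ℝ) ^ i) ^ (α - 1) * dirichletSum (2 ^ i) x := by
  refine (abs_dirichletConv_le_sum_kernelWeight x hα0 hα1 hK hC n _
    (Nat.lt_pow_succ_log_self one_lt_two n)).trans ?_
  rw [Finset.mul_sum]
  refine Finset.sum_le_sum fun i _ => ?_
  rw [← mul_assoc]
  exact mul_le_mul_of_nonneg_right
    (kernelWeight_le (nonneg_of_three_le_mul_one_sub_rpow hα1 hK) n i)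
    (dirichletSum_two_pow_nonneg x i)

end MainEstimate

theorem rpow_mul_fejer_two_pow (α : ℝ) (j : ℕ) (x : G) :
    (2 : ℝ) ^ ((j : ℝ) * α) * fejer (2 ^ j) x
      = ((2 : ℝ) ^ j) ^ (α - 1) * dirichletSum (2 ^ j) x := by
  rw [fejer_eq_inv_mul_dirichletSum, Real.rpow_natCast_mul zero_le_two,
    Real.rpow_sub_one (by positivity)]
  push_cast
  ring

/-- kernel estimate
`|K_n^α| ≤ (c_α / A_{n-1}^α) ∑_{j=0}^{|n|} 2^{jα} K_{2^j}`, where `2^{|n|} ≤ n < 2^{|n|+1}`. -/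
theorem statement3 (α : ℝ) (hα0 : 0 < α) (hα1 : α < 1) :
    ∃ c : ℝ, 0 < c ∧ ∀ n : ℕ, 1 ≤ n → ∀ x : G,
      |cesKernel α n x| ≤ c / cesA α (n - 1) *
        ∑ j ∈ Finset.range (Nat.log 2 n + 1), (2 : ℝ) ^ ((j : ℝ) * α) * fejer (2 ^ j) x := by
  have hρ : (3 / 2 : ℝ) ^ (α - 1) < 1 :=
    Real.rpow_lt_one_of_one_lt_of_neg (by norm_num) (by linarith)
  set K := 3 / (1 - (3 / 2 : ℝ) ^ (α - 1))
  have hK0 : 0 < K := div_pos three_pos (by linarith)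
  have hK : 3 ≤ K * (1 - (3 / 2 : ℝ) ^ (α - 1)) := (div_mul_cancel₀ _ (by linarith)).ge
  refine ⟨K + 2 * Real.exp α * 2 ^ α, by positivity, fun n _ x => ?_⟩
  have hA := cesA_pos (β := α) (by linarith)
  calc |cesKernel α n x| = |dirichletConv (cesA (α - 1)) n x| / cesA α n := by
        rw [cesKernel, abs_mul, abs_inv, abs_of_pos (hA n), inv_mul_eq_div]
        rfl
    _ ≤ |dirichletConv (cesA (α - 1)) n x| / cesA α (n - 1) :=
        div_le_div_of_nonneg_left (abs_nonneg _) (hA _) (cesA_monotone hα0.le (Nat.sub_le n 1))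
    _ ≤ _ := by
        rw [div_mul_eq_mul_div, le_div_iff₀ (hA _), div_mul_cancel₀ _ (hA _).ne']
        simp only [rpow_mul_fejer_two_pow]
        exact abs_dirichletConv_le x hα0 hα1.le hK le_rfl n
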